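/- arXiv:2402.06471 — 2 statements merged into one kernel-verified Lean document; each statement's English description precedes it below -/
import Mathlib

section
/- Consider a biased random walk on the nonnegative integers starting at 0, moving right with probability p and left with probability q = 1 − p (staying at 0 when at 0), with p < q. For any N > 0, the hitting time τ_N of state N satisfies τ_N ≥ (q/p)^{N/2} with probability at least 1 − (p/q)^{N/2}. -/
open MeasureTheory ProbabilityTheory

/-- Every subset of a finite product of copies of `ℤ` is measurable. -/
lemma rw_measSet_all {m : ℕ} (D : Set (Fin m → ℤ)) : MeasurableSet D := by
  have h1 : D = ⋃ v ∈ D, {v} := by simp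
  rw [h1]
  refine MeasurableSet.biUnion D.to_countable (fun v _ => ?_)
  have h2 : ({v} : Set (Fin m → ℤ)) = ⋂ i, (fun w : Fin m → ℤ => w i) ⁻¹' {v i} := by
    ext w; simp [funext_iff, eq_comm]
  rw [h2]
  exact MeasurableSet.iInter fun i => (measurable_pi_apply i) (measurableSet_singleton _)

/-- The key gambler's-ruin-type bound. -/
lemma rw_key {Ω : Type*} [MeasurableSpace Ω] (μ : Measure Ω)
    [IsProbabilityMeasure μ] (p q : ℝ) (hpq : p + q = 1) (hp : 0 < p)
    (hq : 0 < q) (hbias : p < q)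
    (X : ℕ → Ω → ℤ) (hmeas : ∀ i, Measurable (X i))
    (hind : iIndepFun X μ)
    (hX1 : ∀ i, μ {ω | X i ω = 1} = ENNReal.ofReal p)
    (hX2 : ∀ i, μ {ω | X i ω = -1} = ENNReal.ofReal q)
    (N : ℕ) :
    ∀ m s (k : ℤ), μ {ω | ∃ m' ≤ m, (N:ℤ) ≤ k + ∑ i ∈ Finset.range m', X (s+i) ω}
      ≤ ENNReal.ofReal ((p/q) ^ ((N:ℤ) - k)) := by
  have hr : 0 < p / q := div_pos hp hq
  have hr1 : p / q < 1 := (div_lt_one hq).mpr hbias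
  -- trivial bound when k ≥ N
  have htriv : ∀ (A : Set Ω) (k : ℤ), (N:ℤ) ≤ k →
      μ A ≤ ENNReal.ofReal ((p/q) ^ ((N:ℤ) - k)) := by
    intro A k hk
    calc μ A ≤ 1 := prob_le_one
    _ ≤ ENNReal.ofReal ((p/q) ^ ((N:ℤ) - k)) := by
        rw [ENNReal.one_le_ofReal]
        rw [show (N:ℤ) - k = -(k - (N:ℤ)) by ring, zpow_neg]
        rw [one_le_inv_iff₀]
        refine ⟨zpow_pos hr _, ?_⟩
        rw [show k - (N:ℤ) = ((k - (N:ℤ)).toNat : ℤ) by omega, zpow_natCast]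
        exact pow_le_one₀ hr.le hr1.le
  intro m
  induction m with
  | zero =>
    intro s k
    by_cases hk : (N:ℤ) ≤ k
    · exact htriv _ _ hk
    · have : {ω : Ω | ∃ m' ≤ 0, (N:ℤ) ≤ k + ∑ i ∈ Finset.range m', X (s+i) ω} = ∅ := by
        ext ω; simp only [Set.mem_setOf_eq, Set.mem_empty_iff_false, iff_false, not_exists]
        rintro m' ⟨hm', hsum⟩
        obtain rfl : m' = 0 := Nat.le_zero.mp hm'
        simp only [Finset.range_zero, Finset.sum_empty, add_zero] at hsum
        omega
      rw [this]; simp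
  | succ m ih =>
    intro s k
    by_cases hk : (N:ℤ) ≤ k
    · exact htriv _ _ hk
    · -- k < N : condition on the first step
      set Y : Ω → (Fin m → ℤ) := fun ω i => X (s+1+i) ω with hY
      have hindep : IndepFun (X s) Y μ := by
        have h1 := hind.indepFun_finset {s} (Finset.Ico (s+1) (s+1+m))
          (by
            rw [Finset.disjoint_left]
            intro a ha hb
            simp only [Finset.mem_singleton] at ha
            simp only [Finset.mem_Ico] at hb
            omega) hmeas
        have hφ : Measurable (fun v : (({s} : Finset ℕ) : Type) → ℤ =>
            v ⟨s, Finset.mem_singleton_self s⟩) := measurable_pi_apply _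
        have hψ : Measurable (fun (v : ((Finset.Ico (s+1) (s+1+m) : Finset ℕ) : Type) → ℤ)
            (i : Fin m) =>
            v ⟨s+1+i, Finset.mem_Ico.mpr ⟨Nat.le_add_right _ _, Nat.add_lt_add_left i.isLt _⟩⟩) :=
          measurable_pi_lambda _ fun i => measurable_pi_apply _
        exact h1.comp hφ hψ
      have hprod : ∀ (c : ℤ) (D : Set (Fin m → ℤ)),
          μ ((X s ⁻¹' {c}) ∩ (Y ⁻¹' D)) = μ (X s ⁻¹' {c}) * μ (Y ⁻¹' D) :=
        fun c D => hindep.measure_inter_preimage_eq_mul {c} D (measurableSet_singleton c)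
          (rw_measSet_all D)
      have hE : ∀ k' : ℤ, ∃ D : Set (Fin m → ℤ), Y ⁻¹' D =
          {ω | ∃ m' ≤ m, (N:ℤ) ≤ k' + ∑ i ∈ Finset.range m', X (s+1+i) ω} := by
        intro k'
        refine ⟨{v | ∃ m' ≤ m, (N:ℤ) ≤ k' + ∑ i ∈ Finset.range m',
          if h : i < m then v ⟨i, h⟩ else 0}, ?_⟩
        ext ω
        simp only [Set.mem_preimage, Set.mem_setOf_eq, hY]
        refine exists_congr fun m' => and_congr_right fun hm' => ?_
        rw [Finset.sum_congr rfl
          (fun i hi => dif_pos (lt_of_lt_of_le (Finset.mem_range.mp hi) hm'))]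
      obtain ⟨D1, hD1⟩ := hE (k+1)
      obtain ⟨D2, hD2⟩ := hE (k-1)
      set A := {ω : Ω | ∃ m' ≤ m+1, (N:ℤ) ≤ k + ∑ i ∈ Finset.range m', X (s+i) ω} with hA
      have hshift : ∀ ω, ∀ i : ℕ, X (s+(i+1)) ω = X (s+1+i) ω := by
        intro ω i; rw [show s+(i+1) = s+1+i by omega]
      have hA1 : A ∩ (X s ⁻¹' {1}) = (X s ⁻¹' {1}) ∩ (Y ⁻¹' D1) := by
        rw [hD1]; ext ω
        simp only [hA, Set.mem_inter_iff, Set.mem_preimage, Set.mem_singleton_iff,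
          Set.mem_setOf_eq]
        constructor
        · rintro ⟨⟨m', hm', hsum⟩, hx⟩
          refine ⟨hx, ?_⟩
          match m', hm', hsum with
          | 0, hm', hsum =>
            simp only [Finset.range_zero, Finset.sum_empty, add_zero] at hsum; omega
          | (m''+1), hm', hsum =>
            refine ⟨m'', by omega, ?_⟩
            rw [Finset.sum_range_succ'] at hsum
            rw [Finset.sum_congr rfl (fun i _ => hshift ω i)] at hsum
            rw [show s+0 = s from rfl, hx] at hsum
            linarith
        · rintro ⟨hx, m'', hm'', hsum⟩
          refine ⟨⟨m''+1, by omega, ?_⟩, hx⟩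
          rw [Finset.sum_range_succ', Finset.sum_congr rfl (fun i _ => hshift ω i),
            show s+0 = s from rfl, hx]
          linarith
      have hA2 : A ∩ (X s ⁻¹' {(-1:ℤ)}) = (X s ⁻¹' {(-1:ℤ)}) ∩ (Y ⁻¹' D2) := by
        rw [hD2]; ext ω
        simp only [hA, Set.mem_inter_iff, Set.mem_preimage, Set.mem_singleton_iff,
          Set.mem_setOf_eq]
        constructor
        · rintro ⟨⟨m', hm', hsum⟩, hx⟩
          refine ⟨hx, ?_⟩
          match m', hm', hsum with
          | 0, hm', hsum =>
            simp only [Finset.range_zero, Finset.sum_empty, add_zero] at hsum; omega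
          | (m''+1), hm', hsum =>
            refine ⟨m'', by omega, ?_⟩
            rw [Finset.sum_range_succ'] at hsum
            rw [Finset.sum_congr rfl (fun i _ => hshift ω i)] at hsum
            rw [show s+0 = s from rfl, hx] at hsum
            linarith
        · rintro ⟨hx, m'', hm'', hsum⟩
          refine ⟨⟨m''+1, by omega, ?_⟩, hx⟩
          rw [Finset.sum_range_succ', Finset.sum_congr rfl (fun i _ => hshift ω i),
            show s+0 = s from rfl, hx]
          linarith
      have hm1 : MeasurableSet (X s ⁻¹' {(1:ℤ)}) := hmeas s (measurableSet_singleton _)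
      have hm2 : MeasurableSet (X s ⁻¹' {(-1:ℤ)}) := hmeas s (measurableSet_singleton _)
      have hnull : μ ((X s ⁻¹' {(1:ℤ)}) ∪ (X s ⁻¹' {(-1:ℤ)}))ᶜ = 0 := by
        have hdisj : Disjoint (X s ⁻¹' {(1:ℤ)}) (X s ⁻¹' {(-1:ℤ)}) := by
          rw [Set.disjoint_left]
          rintro ω h1 h2
          simp only [Set.mem_preimage, Set.mem_singleton_iff] at h1 h2
          omega
        have hu : μ ((X s ⁻¹' {(1:ℤ)}) ∪ (X s ⁻¹' {(-1:ℤ)})) = 1 := by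
          rw [measure_union hdisj hm2,
            show X s ⁻¹' {(1:ℤ)} = {ω | X s ω = 1} from rfl,
            show X s ⁻¹' {(-1:ℤ)} = {ω | X s ω = -1} from rfl,
            hX1, hX2, ← ENNReal.ofReal_add hp.le hq.le, hpq, ENNReal.ofReal_one]
        rw [measure_compl (hm1.union hm2) (measure_ne_top μ _), hu, measure_univ, tsub_self]
      have hsub : A ⊆ (A ∩ (X s ⁻¹' {(1:ℤ)})) ∪ ((A ∩ (X s ⁻¹' {(-1:ℤ)})) ∪
          ((X s ⁻¹' {(1:ℤ)}) ∪ (X s ⁻¹' {(-1:ℤ)}))ᶜ) := by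
        intro ω hω
        by_cases h1 : X s ω = 1
        · exact Or.inl ⟨hω, h1⟩
        · by_cases h2 : X s ω = -1
          · exact Or.inr (Or.inl ⟨hω, h2⟩)
          · refine Or.inr (Or.inr ?_)
            simp only [Set.mem_compl_iff, Set.mem_union, Set.mem_preimage,
              Set.mem_singleton_iff]
            tauto
      calc μ A ≤ μ (A ∩ (X s ⁻¹' {(1:ℤ)})) + (μ (A ∩ (X s ⁻¹' {(-1:ℤ)})) +
            μ ((X s ⁻¹' {(1:ℤ)}) ∪ (X s ⁻¹' {(-1:ℤ)}))ᶜ) :=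
          (measure_mono hsub).trans ((measure_union_le _ _).trans
            (add_le_add le_rfl (measure_union_le _ _)))
      _ = μ (A ∩ (X s ⁻¹' {(1:ℤ)})) + μ (A ∩ (X s ⁻¹' {(-1:ℤ)})) := by
          rw [hnull, add_zero]
      _ = ENNReal.ofReal p * μ (Y ⁻¹' D1) + ENNReal.ofReal q * μ (Y ⁻¹' D2) := by
          rw [hA1, hA2, hprod 1 D1, hprod (-1) D2,
            show X s ⁻¹' {(1:ℤ)} = {ω | X s ω = 1} from rfl,
            show X s ⁻¹' {(-1:ℤ)} = {ω | X s ω = -1} from rfl, hX1, hX2]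
      _ ≤ ENNReal.ofReal p * ENNReal.ofReal ((p/q)^((N:ℤ)-(k+1))) +
            ENNReal.ofReal q * ENNReal.ofReal ((p/q)^((N:ℤ)-(k-1))) := by
          gcongr
          · rw [hD1]; exact ih (s+1) (k+1)
          · rw [hD2]; exact ih (s+1) (k-1)
      _ = ENNReal.ofReal (p * (p/q)^((N:ℤ)-(k+1)) + q * (p/q)^((N:ℤ)-(k-1))) := by
          rw [← ENNReal.ofReal_mul hp.le, ← ENNReal.ofReal_mul hq.le,
            ← ENNReal.ofReal_add (by positivity) (by positivity)]
      _ ≤ ENNReal.ofReal ((p/q)^((N:ℤ)-k)) := by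
          apply ENNReal.ofReal_le_ofReal
          have hne : (p/q : ℝ) ≠ 0 := ne_of_gt hr
          rw [show (N:ℤ)-(k+1) = ((N:ℤ)-k) - 1 by ring,
            show (N:ℤ)-(k-1) = ((N:ℤ)-k) + 1 by ring,
            zpow_sub_one₀ hne, zpow_add_one₀ hne]
          have h1 : p * (p/q)⁻¹ = q := by field_simp
          have h2 : q * (p/q) = p := by field_simp
          calc p * ((p/q)^((N:ℤ)-k) * (p/q)⁻¹) + q * ((p/q)^((N:ℤ)-k) * (p/q))
              = (p/q)^((N:ℤ)-k) * (p * (p/q)⁻¹ + q * (p/q)) := by ring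
            _ = (p/q)^((N:ℤ)-k) := by
                rw [h1, h2, show q + p = 1 by linarith, mul_one]
            _ ≤ (p/q)^((N:ℤ)-k) := le_rfl
          

/-- Statement (2) of the Random Walk Hitting Time lemma: a biased random walk
on ℕ (reflected at 0) with right-probability `p < q = 1 - p` does not hit `N`
before time `(q/p)^(N/2)` with probability at least `1 - (p/q)^(N/2)`. -/
theorem stmt_5 {Ω : Type*} [MeasurableSpace Ω] (μ : Measure Ω)
    [IsProbabilityMeasure μ] (p q : ℝ) (hpq : p + q = 1) (hp : 0 < p)
    (hq : 0 < q) (hbias : p < q)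
    (X : ℕ → Ω → ℤ) (hmeas : ∀ i, Measurable (X i))
    (hind : iIndepFun X μ)
    (hX1 : ∀ i, μ {ω | X i ω = 1} = ENNReal.ofReal p)
    (hX2 : ∀ i, μ {ω | X i ω = -1} = ENNReal.ofReal q)
    (W : ℕ → Ω → ℤ) (hW0 : ∀ ω, W 0 ω = 0)
    (hWrec : ∀ t ω, W (t + 1) ω = max 0 (W t ω + X t ω))
    (N : ℕ) (hN : 0 < N) :
    1 - ENNReal.ofReal ((p / q) ^ ((N : ℝ) / 2)) ≤
      μ {ω | ∀ t : ℕ, (t : ℝ) < (q / p) ^ ((N : ℝ) / 2) → W t ω ≠ N} := by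
  have hr0 : (0:ℝ) < q / p := div_pos hq hp
  set c : ℝ := (q / p) ^ ((N : ℝ) / 2) with hc
  have hcpos : 0 < c := Real.rpow_pos_of_pos hr0 _
  set M : ℕ := ⌈c⌉₊ with hM
  set K : ℕ := ⌈c - N⌉₊ with hK
  set G := {ω | ∀ t : ℕ, (t : ℝ) < c → W t ω ≠ N} with hG
  -- deterministic bound on the walk in terms of suffix sums
  have hWle : ∀ t ω, ∃ s ≤ t, W t ω ≤ ∑ i ∈ Finset.range (t - s), X (s+i) ω := by
    intro t
    induction t with
    | zero => intro ω; exact ⟨0, le_rfl, by simp [hW0 ω]⟩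
    | succ t iht =>
      intro ω
      obtain ⟨s, hs, hle⟩ := iht ω
      rcases le_or_gt (W t ω + X t ω) 0 with h | h
      · exact ⟨t+1, le_rfl, by simp [hWrec t ω, max_eq_left h]⟩
      · refine ⟨s, hs.trans (Nat.le_succ t), ?_⟩
        rw [hWrec t ω, max_eq_right h.le]
        have h1 : t + 1 - s = (t - s) + 1 := by omega
        rw [h1, Finset.sum_range_succ]
        have hts : s + (t - s) = t := by omega
        rw [hts]
        exact add_le_add hle le_rfl
  -- bound on each bad event
  have hE : ∀ s, μ {ω | ∃ m' ≤ M, (N:ℤ) ≤ 0 + ∑ i ∈ Finset.range m', X (s+i) ω}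
      ≤ ENNReal.ofReal ((p/q)^(N:ℕ)) := by
    intro s
    have h := rw_key μ p q hpq hp hq hbias X hmeas hind hX1 hX2 N M s 0
    rwa [sub_zero, zpow_natCast] at h
  -- the steps are almost surely ±1
  have hZ : ∀ i, μ ({ω | X i ω = (1:ℤ)} ∪ {ω | X i ω = (-1:ℤ)})ᶜ = 0 := by
    intro i
    have hm1 : MeasurableSet {ω | X i ω = (1:ℤ)} := hmeas i (measurableSet_singleton _)
    have hm2 : MeasurableSet {ω | X i ω = (-1:ℤ)} := hmeas i (measurableSet_singleton _)
    have hdisj : Disjoint {ω | X i ω = (1:ℤ)} {ω | X i ω = (-1:ℤ)} := by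
      rw [Set.disjoint_left]
      rintro ω h1 h2
      simp only [Set.mem_setOf_eq] at h1 h2
      omega
    rw [measure_compl (hm1.union hm2) (measure_ne_top μ _), measure_union hdisj hm2, hX1, hX2,
      ← ENNReal.ofReal_add hp.le hq.le, hpq, ENNReal.ofReal_one, measure_univ, tsub_self]
  have hOm : μ {ω | ¬∀ i < M, (X i ω = 1 ∨ X i ω = -1)} = 0 := by
    have hsub : {ω | ¬∀ i < M, (X i ω = 1 ∨ X i ω = -1)} ⊆
        ⋃ i ∈ Finset.range M, ({ω | X i ω = (1:ℤ)} ∪ {ω | X i ω = (-1:ℤ)})ᶜ := by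
      intro ω hω
      simp only [Set.mem_setOf_eq] at hω
      push_neg at hω
      obtain ⟨i, hi, hne1, hne2⟩ := hω
      refine Set.mem_biUnion (Finset.mem_range.mpr hi) ?_
      simp only [Set.mem_compl_iff, Set.mem_union, Set.mem_setOf_eq]
      tauto
    refine le_antisymm ((measure_mono hsub).trans
      ((measure_biUnion_finset_le _ _).trans ?_)) (zero_le)
    exact le_of_eq (Finset.sum_eq_zero fun i _ => hZ i)
  -- inclusion of the complement into the bad events
  have hincl : Gᶜ ⊆ {ω | ¬∀ i < M, (X i ω = 1 ∨ X i ω = -1)} ∪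
      ⋃ s ∈ Finset.range K, {ω | ∃ m' ≤ M, (N:ℤ) ≤ 0 + ∑ i ∈ Finset.range m', X (s+i) ω} := by
    intro ω hω
    simp only [hG, Set.mem_compl_iff, Set.mem_setOf_eq] at hω
    push_neg at hω
    obtain ⟨t, ht, hWt⟩ := hω
    by_cases hgood : ∀ i < M, (X i ω = 1 ∨ X i ω = -1)
    · right
      obtain ⟨s, hs, hle⟩ := hWle t ω
      have htM : t < M := by
        have h2 := Nat.le_ceil c
        exact_mod_cast ht.trans_le h2
      have hsum_le : (∑ i ∈ Finset.range (t - s), X (s+i) ω) ≤ ((t - s : ℕ) : ℤ) := by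
        calc (∑ i ∈ Finset.range (t - s), X (s+i) ω) ≤ ∑ _i ∈ Finset.range (t - s), 1 := by
              apply Finset.sum_le_sum
              intro i hi
              have hiM : s + i < M := by
                have := Finset.mem_range.mp hi; omega
              rcases hgood (s+i) hiM with h | h <;> omega
          _ = ((t - s : ℕ) : ℤ) := by simp
      have hN' : N ≤ t - s := by
        have h3 : (N:ℤ) ≤ ((t - s : ℕ) : ℤ) := by
          rw [hWt] at hle
          exact hle.trans hsum_le
        exact_mod_cast h3
      have hsK : s < K := by
        have h1 : s + N ≤ t := by omega
        have h2 : (s:ℝ) < c - N := by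
          have h4 : ((s + N : ℕ) : ℝ) ≤ (t:ℝ) := by exact_mod_cast h1
          push_cast at h4
          linarith
        have h3 : (s:ℝ) < (⌈c - (N:ℝ)⌉₊ : ℝ) := h2.trans_le (Nat.le_ceil _)
        exact_mod_cast h3
      refine Set.mem_biUnion (Finset.mem_range.mpr hsK) ?_
      refine ⟨t - s, by omega, ?_⟩
      rw [zero_add]
      calc (N:ℤ) = W t ω := hWt.symm
        _ ≤ _ := hle
    · exact Or.inl hgood
  -- measure bound on the complement
  have hGc : μ Gᶜ ≤ ENNReal.ofReal ((p/q) ^ ((N:ℝ)/2)) := by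
    refine (measure_mono hincl).trans ((measure_union_le _ _).trans ?_)
    rw [hOm, zero_add]
    refine (measure_biUnion_finset_le _ _).trans ?_
    refine (Finset.sum_le_sum fun s _ => hE s).trans ?_
    rw [Finset.sum_const, Finset.card_range, nsmul_eq_mul]
    have hKc : (K:ℝ) ≤ c := by
      by_cases h : c - (N:ℝ) ≤ 0
      · have h0 : K = 0 := by rw [hK]; exact Nat.ceil_eq_zero.mpr h
        rw [h0]; exact_mod_cast hcpos.le
      · push_neg at h
        have h5 := Nat.ceil_lt_add_one (le_of_lt h)
        have hN1 : (1:ℝ) ≤ N := by exact_mod_cast hN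
        rw [hK]; linarith
    calc (K : ENNReal) * ENNReal.ofReal ((p/q)^(N:ℕ))
        = ENNReal.ofReal ((K:ℝ) * (p/q)^(N:ℕ)) := by
          rw [← ENNReal.ofReal_natCast K, ← ENNReal.ofReal_mul (Nat.cast_nonneg K)]
      _ ≤ ENNReal.ofReal (c * (p/q)^(N:ℕ)) := by
          apply ENNReal.ofReal_le_ofReal
          have : (0:ℝ) ≤ (p/q)^(N:ℕ) := by positivity
          exact mul_le_mul_of_nonneg_right hKc this
      _ = ENNReal.ofReal ((p/q) ^ ((N:ℝ)/2)) := by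
          congr 1
          have hpq0 : (0:ℝ) < p / q := div_pos hp hq
          rw [hc, show q / p = (p/q)⁻¹ by rw [inv_div], ← Real.rpow_natCast (p/q) N,
            Real.inv_rpow hpq0.le, ← Real.rpow_neg hpq0.le, ← Real.rpow_add hpq0]
          rw [show -((N:ℝ)/2) + N = (N:ℝ)/2 by ring]
  rw [tsub_le_iff_right]
  calc (1:ENNReal) = μ Set.univ := measure_univ.symm
    _ = μ (G ∪ Gᶜ) := by rw [Set.union_compl_self]
    _ ≤ μ G + μ Gᶜ := measure_union_le _ _
    _ ≤ μ G + ENNReal.ofReal ((p/q) ^ ((N:ℝ)/2)) := add_le_add le_rfl hGc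
end

section
/- Let X = ∑_{i=1}^n X_i where the X_i are independent geometric random variables with X_i ~ Geo(p_i), p_i ∈ (0,1]. For any λ ≥ 1: P(X ≥ λ·E[X]) ≤ exp(−min_i p_i · E[X] · (λ − 1 − ln λ)). -/
open MeasureTheory ProbabilityTheory

set_option maxHeartbeats 1000000
lemma aux_exp_one_sub (t : ℝ) : Real.exp t * (1 - t) ≤ 1 := by
  have h := Real.add_one_le_exp (-t)
  have h3 : Real.exp t * Real.exp (-t) = 1 := by rw [← Real.exp_add]; simp
  nlinarith [Real.exp_pos t]

lemma aux_exp_le (t : ℝ) (ht : t < 1) : Real.exp t ≤ (1 - t)⁻¹ := by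
  rw [le_inv_comm₀ (Real.exp_pos t) (by linarith), inv_eq_one_div,
    le_div_iff₀ (Real.exp_pos t)]
  linarith [aux_exp_one_sub t]

open MeasureTheory ProbabilityTheory
open scoped ENNReal NNReal

section Key
variable {Ω : Type*} [MeasurableSpace Ω] (μ : Measure Ω) [IsProbabilityMeasure μ]

lemma aux_pmf_sum (p : ℝ) (hp0 : 0 < p) (hp1 : p ≤ 1) :
    ∑' j : ℕ, ENNReal.ofReal ((1 - p) ^ j * p) = 1 := by
  have h1p : (0:ℝ) ≤ 1 - p := by linarith
  have : ∀ j : ℕ, ENNReal.ofReal ((1 - p) ^ j * p)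
      = ENNReal.ofReal (1-p) ^ j * ENNReal.ofReal p := by
    intro j
    rw [ENNReal.ofReal_mul (by positivity), ENNReal.ofReal_pow h1p]
  simp_rw [this]
  rw [ENNReal.tsum_mul_right, ENNReal.tsum_geometric]
  have h2 : (1 : ℝ≥0∞) - ENNReal.ofReal (1 - p) = ENNReal.ofReal p := by
    rw [← ENNReal.ofReal_one, ← ENNReal.ofReal_sub _ h1p]
    norm_num
  rw [h2, ENNReal.inv_mul_cancel (by simpa using hp0) ENNReal.ofReal_ne_top]

lemma aux_zero (X : Ω → ℕ) (hX : Measurable X) (p : ℝ) (hp0 : 0 < p) (hp1 : p ≤ 1)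
    (hgeo : ∀ j : ℕ, 1 ≤ j → μ {ω | X ω = j} = ENNReal.ofReal ((1 - p) ^ (j - 1) * p)) :
    μ {ω | X ω = 0} = 0 := by
  have hdisj : Pairwise (Function.onFun Disjoint (fun j : ℕ => X ⁻¹' {j + 1})) := by
    intro i j hij
    simp only [Function.onFun, Set.disjoint_left, Set.mem_preimage, Set.mem_singleton_iff]
    intro ω h1 h2
    exact hij (by omega)
  have hiu := measure_iUnion (μ := μ) hdisj (fun j => hX (measurableSet_singleton (j + 1)))
  have hcup : (⋃ j : ℕ, X ⁻¹' {j + 1}) = {ω | X ω = 0}ᶜ := by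
    ext ω
    simp only [Set.mem_iUnion, Set.mem_preimage, Set.mem_singleton_iff, Set.mem_compl_iff,
      Set.mem_setOf_eq]
    constructor
    · rintro ⟨j, hj⟩; omega
    · intro h; exact ⟨X ω - 1, by omega⟩
  have htail : ∑' j : ℕ, μ (X ⁻¹' {j + 1}) = 1 := by
    have heq : ∀ j : ℕ, μ (X ⁻¹' {j + 1}) = ENNReal.ofReal ((1 - p) ^ j * p) := by
      intro j
      have : X ⁻¹' {j + 1} = {ω | X ω = j + 1} := rfl
      rw [this, hgeo (j + 1) (by omega)]
      norm_num
    simp_rw [heq]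
    exact aux_pmf_sum p hp0 hp1
  rw [hcup, htail] at hiu
  have hms : MeasurableSet {ω | X ω = 0} := hX (measurableSet_singleton 0)
  exact (prob_compl_eq_one_iff hms).mp hiu

lemma aux_lintegral (X : Ω → ℕ) (hX : Measurable X) (p t : ℝ) (hp0 : 0 < p) (hp1 : p ≤ 1)
    (hgeo : ∀ j : ℕ, 1 ≤ j → μ {ω | X ω = j} = ENNReal.ofReal ((1 - p) ^ (j - 1) * p))
    (ht0 : 0 ≤ t) (htp : t < p) :
    ∫⁻ ω, ENNReal.ofReal (Real.exp (t * X ω)) ∂μ ≤ ENNReal.ofReal ((1 - t / p)⁻¹) := by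
  have hlt1 : t < 1 := lt_of_lt_of_le htp hp1
  have h1t : (0:ℝ) < 1 - t := by linarith
  have h1p : (0:ℝ) ≤ 1 - p := by linarith
  have hr1 : (1 - p) * Real.exp t < 1 := by
    calc (1 - p) * Real.exp t ≤ (1 - p) * (1 - t)⁻¹ :=
          mul_le_mul_of_nonneg_left (aux_exp_le t hlt1) h1p
    _ = (1 - p) / (1 - t) := by rw [div_eq_mul_inv]
    _ < 1 := (div_lt_one h1t).mpr (by linarith)
  have hr0 : (0:ℝ) ≤ (1 - p) * Real.exp t := by positivity
  -- move to map measure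
  have hg : Measurable (fun n : ℕ => ENNReal.ofReal (Real.exp (t * n))) :=
    measurable_from_top
  have hmapint : ∫⁻ ω, ENNReal.ofReal (Real.exp (t * X ω)) ∂μ
      = ∑' n : ℕ, ENNReal.ofReal (Real.exp (t * n)) * μ {ω | X ω = n} := by
    rw [← lintegral_map hg hX, lintegral_countable']
    congr 1
    ext n
    rw [Measure.map_apply hX (measurableSet_singleton n)]
    rfl
  have hzero := aux_zero μ X hX p hp0 hp1 hgeo
  -- reindex by succ
  have hreindex : ∑' n : ℕ, ENNReal.ofReal (Real.exp (t * n)) * μ {ω | X ω = n}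
      = ∑' j : ℕ, ENNReal.ofReal (Real.exp (t * ((j+1 : ℕ) : ℝ))) * μ {ω | X ω = j+1} := by
    refine (Function.Injective.tsum_eq (g := fun j : ℕ => j + 1)
      (f := fun n : ℕ => ENNReal.ofReal (Real.exp (t * n)) * μ {ω | X ω = n})
      (fun a b h => by simpa using h) ?_).symm
    intro n hn
    simp only [Function.mem_support, Set.mem_range] at *
    rcases n with _ | j
    · exact absurd (by rw [hzero, mul_zero]) hn
    · exact ⟨j, rfl⟩
  have hterm : ∀ j : ℕ, ENNReal.ofReal (Real.exp (t * ((j+1 : ℕ) : ℝ))) * μ {ω | X ω = j+1}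
      = ENNReal.ofReal (p * Real.exp t) * ENNReal.ofReal ((1 - p) * Real.exp t) ^ j := by
    intro j
    rw [hgeo (j+1) (by omega)]
    have h1 : (j + 1 : ℕ) - 1 = j := by omega
    rw [h1, ← ENNReal.ofReal_mul (by positivity), ← ENNReal.ofReal_pow hr0,
      ← ENNReal.ofReal_mul (by positivity)]
    congr 1
    have hexp : Real.exp (t * ((j+1 : ℕ) : ℝ)) = Real.exp t ^ j * Real.exp t := by
      rw [← Real.exp_nat_mul, ← Real.exp_add]
      congr 1
      push_cast
      ring
    rw [hexp, mul_pow]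
    ring
  have hsum : ∑' j : ℕ, ENNReal.ofReal (Real.exp (t * ((j+1 : ℕ) : ℝ))) * μ {ω | X ω = j+1}
      = ENNReal.ofReal (p * Real.exp t) * (ENNReal.ofReal (1 - (1 - p) * Real.exp t))⁻¹ := by
    simp_rw [hterm]
    rw [ENNReal.tsum_mul_left, ENNReal.tsum_geometric]
    congr 2
    rw [← ENNReal.ofReal_one, ← ENNReal.ofReal_sub _ hr0]
  rw [hmapint, hreindex, hsum]
  have hden : (0:ℝ) < 1 - (1 - p) * Real.exp t := by linarith
  rw [← div_eq_mul_inv, ← ENNReal.ofReal_div_of_pos hden]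
  apply ENNReal.ofReal_le_ofReal
  rw [div_le_iff₀ hden, inv_eq_one_div, div_mul_eq_mul_div, le_div_iff₀ (by
    have : t / p < 1 := (div_lt_one hp0).mpr htp
    linarith)]
  have hpe : p * Real.exp t * (1 - t / p) = Real.exp t * (p - t) := by
    field_simp
  rw [hpe]
  have := aux_exp_one_sub t
  nlinarith [Real.exp_pos t]

lemma aux_integrable (X : Ω → ℕ) (hX : Measurable X) (p t : ℝ) (hp0 : 0 < p) (hp1 : p ≤ 1)
    (hgeo : ∀ j : ℕ, 1 ≤ j → μ {ω | X ω = j} = ENNReal.ofReal ((1 - p) ^ (j - 1) * p))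
    (ht0 : 0 ≤ t) (htp : t < p) :
    Integrable (fun ω => Real.exp (t * (X ω : ℝ))) μ := by
  have hm : Measurable (fun ω => Real.exp (t * (X ω : ℝ))) :=
    (((measurable_from_top (f := (Nat.cast : ℕ → ℝ))).comp hX).const_mul t).exp
  refine ⟨hm.aestronglyMeasurable, ?_⟩
  rw [hasFiniteIntegral_iff_ofReal (ae_of_all μ (fun ω => (Real.exp_pos _).le))]
  exact lt_of_le_of_lt (aux_lintegral μ X hX p t hp0 hp1 hgeo ht0 htp) ENNReal.ofReal_lt_top

lemma aux_mgf_le (X : Ω → ℕ) (hX : Measurable X) (p t : ℝ) (hp0 : 0 < p) (hp1 : p ≤ 1)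
    (hgeo : ∀ j : ℕ, 1 ≤ j → μ {ω | X ω = j} = ENNReal.ofReal ((1 - p) ^ (j - 1) * p))
    (ht0 : 0 ≤ t) (htp : t < p) :
    mgf (fun ω => (X ω : ℝ)) μ t ≤ (1 - t / p)⁻¹ := by
  have hm : Measurable (fun ω => Real.exp (t * (X ω : ℝ))) :=
    (((measurable_from_top (f := (Nat.cast : ℕ → ℝ))).comp hX).const_mul t).exp
  have h1 : mgf (fun ω => (X ω : ℝ)) μ t
      = (∫⁻ ω, ENNReal.ofReal (Real.exp (t * (X ω : ℝ))) ∂μ).toReal := by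
    rw [mgf, integral_eq_lintegral_of_nonneg_ae (ae_of_all μ (fun ω => (Real.exp_pos _).le))
      hm.aestronglyMeasurable]
  rw [h1]
  refine ENNReal.toReal_le_of_le_ofReal ?_ (aux_lintegral μ X hX p t hp0 hp1 hgeo ht0 htp)
  have h2 : t / p < 1 := (div_lt_one hp0).mpr htp
  have h3 : (0:ℝ) < 1 - t / p := by linarith
  positivity

end Key

lemma aux_inv_le_exp (lam s : ℝ) (hlam : 1 < lam) (hs0 : 0 < s) (hs1 : s ≤ 1) :
    (1 - s * (1 - lam⁻¹))⁻¹ ≤ Real.exp (s * Real.log lam) := by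
  have hlaminv : (0:ℝ) < lam⁻¹ := by positivity
  have hconc := (strictConcaveOn_log_Ioi.concaveOn).2 (Set.mem_Ioi.mpr hlaminv)
    (Set.mem_Ioi.mpr one_pos) hs0.le (by linarith : (0:ℝ) ≤ 1 - s) (by ring)
  simp only [smul_eq_mul, mul_one, Real.log_inv, Real.log_one, mul_zero, add_zero] at hconc
  have hcomb : s * lam⁻¹ + (1 - s) = 1 - s * (1 - lam⁻¹) := by ring
  rw [hcomb] at hconc
  have hpos : (0:ℝ) < 1 - s * (1 - lam⁻¹) := by
    have h1 : s * lam⁻¹ > 0 := by positivity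
    have : s * lam⁻¹ + (1 - s) > 0 := by linarith
    linarith [hcomb ▸ this]
  calc (1 - s * (1 - lam⁻¹))⁻¹ = Real.exp (-(Real.log (1 - s * (1 - lam⁻¹)))) := by
        rw [Real.exp_neg, Real.exp_log hpos]
    _ ≤ Real.exp (s * Real.log lam) := by
        apply Real.exp_le_exp.mpr
        linarith


/-- Janson's tail bound for sums of independent geometric random variables
(`Geo(p)` supported on `{1, 2, ...}` with `P(Geo(p) = j) = (1-p)^(j-1) * p`):
for `λ ≥ 1`, `P(X ≥ λ E[X]) ≤ exp (-(min_i p_i) * E[X] * (λ - 1 - ln λ))`. -/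
theorem stmt_15 {Ω : Type*} [MeasurableSpace Ω] (μ : Measure Ω)
    [IsProbabilityMeasure μ] (n : ℕ) (hn : 0 < n)
    (p : Fin n → ℝ) (hp0 : ∀ i, 0 < p i) (hp1 : ∀ i, p i ≤ 1)
    (X : Fin n → Ω → ℕ) (hmeas : ∀ i, Measurable (X i))
    (hind : iIndepFun X μ)
    (hgeo : ∀ i (j : ℕ), 1 ≤ j →
      μ {ω | X i ω = j} = ENNReal.ofReal ((1 - p i) ^ (j - 1) * p i))
    (E : ℝ) (hE : E = ∑ i, 1 / p i)
    (lam : ℝ) (hlam : 1 ≤ lam) :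
    μ {ω | lam * E ≤ (∑ i, X i ω : ℝ)} ≤
      ENNReal.ofReal
        (Real.exp (-(Finset.univ.inf' (Finset.univ_nonempty_iff.2
            (Fin.pos_iff_nonempty.1 hn)) p) * E * (lam - 1 - Real.log lam))) := by
  set m : ℝ := Finset.univ.inf' (Finset.univ_nonempty_iff.2 (Fin.pos_iff_nonempty.1 hn)) p
    with hmdef
  have hne : (Finset.univ : Finset (Fin n)).Nonempty :=
    Finset.univ_nonempty_iff.2 (Fin.pos_iff_nonempty.1 hn)
  obtain ⟨i₀, -, hmi₀⟩ := Finset.exists_mem_eq_inf' hne p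
  have hm_pos : 0 < m := by rw [hmdef, hmi₀]; exact hp0 i₀
  have hm_le : ∀ i, m ≤ p i := fun i => Finset.inf'_le p (Finset.mem_univ i)
  rcases hlam.eq_or_lt with heq | hlam1
  · -- lam = 1
    rw [← heq]
    simp only [Real.log_one, sub_zero, sub_self, mul_zero, Real.exp_zero, ENNReal.ofReal_one]
    exact prob_le_one
  -- main case
  have hlam0 : (0:ℝ) < lam := by linarith
  set a : ℝ := 1 - lam⁻¹ with hadef
  have ha0 : 0 < a := by
    have : lam⁻¹ < 1 := by
      rw [inv_lt_one_iff₀]; right; exact hlam1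
    simp only [hadef]; linarith
  have ha1 : a < 1 := by
    have : 0 < lam⁻¹ := by positivity
    simp only [hadef]; linarith
  set t : ℝ := m * a with htdef
  have ht0 : 0 ≤ t := by positivity
  have htp : ∀ i, t < p i := fun i => lt_of_lt_of_le (by nlinarith) (hm_le i)
  set Y : Fin n → Ω → ℝ := fun i ω => (X i ω : ℝ) with hYdef
  have hYmeas : ∀ i, Measurable (Y i) := fun i =>
    (measurable_from_top (f := (Nat.cast : ℕ → ℝ))).comp (hmeas i)
  have hindY : iIndepFun Y μ :=
    hind.comp (fun _ => (Nat.cast : ℕ → ℝ))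
      (fun _ => measurable_from_top (f := (Nat.cast : ℕ → ℝ)))
  have hint : ∀ i, Integrable (fun ω => Real.exp (t * Y i ω)) μ := fun i =>
    aux_integrable μ (X i) (hmeas i) (p i) t (hp0 i) (hp1 i) (hgeo i) ht0 (htp i)
  have hSint : Integrable (fun ω => Real.exp (t * (∑ i, Y i) ω)) μ :=
    hindY.integrable_exp_mul_sum hYmeas (s := Finset.univ) (fun i _ => hint i)
  have hChern := measure_ge_le_exp_mul_mgf (μ := μ) (X := ∑ i, Y i) (t := t)
    (lam * E) ht0 hSint
  have hset : {ω | lam * E ≤ (∑ i, X i ω : ℝ)} = {ω | lam * E ≤ (∑ i, Y i) ω} := by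
    ext ω
    simp [hYdef, Finset.sum_apply]
  have hmgf_sum : mgf (∑ i, Y i) μ t = ∏ i, mgf (Y i) μ t :=
    hindY.mgf_sum hYmeas Finset.univ
  have hmgf_le : ∀ i, mgf (Y i) μ t ≤ Real.exp ((m / p i) * Real.log lam) := by
    intro i
    refine le_trans (aux_mgf_le μ (X i) (hmeas i) (p i) t (hp0 i) (hp1 i) (hgeo i) ht0 (htp i)) ?_
    have hs0 : 0 < m / p i := div_pos hm_pos (hp0 i)
    have hs1 : m / p i ≤ 1 := (div_le_one (hp0 i)).mpr (hm_le i)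
    have harg : 1 - t / p i = 1 - (m / p i) * (1 - lam⁻¹) := by
      rw [htdef, hadef]; ring
    rw [harg]
    exact aux_inv_le_exp lam (m / p i) hlam1 hs0 hs1
  have hprod : ∏ i, mgf (Y i) μ t ≤ Real.exp (m * E * Real.log lam) := by
    calc ∏ i, mgf (Y i) μ t ≤ ∏ i, Real.exp ((m / p i) * Real.log lam) :=
          Finset.prod_le_prod (fun i _ => mgf_nonneg) (fun i _ => hmgf_le i)
      _ = Real.exp (∑ i, (m / p i) * Real.log lam) := (Real.exp_sum _ _).symm
      _ = Real.exp (m * E * Real.log lam) := by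
          congr 1
          rw [hE, Finset.mul_sum, Finset.sum_mul]
          exact Finset.sum_congr rfl (fun i _ => by rw [mul_one_div])
  have hfinal : Real.exp (-t * (lam * E)) * Real.exp (m * E * Real.log lam)
      = Real.exp (-m * E * (lam - 1 - Real.log lam)) := by
    rw [← Real.exp_add]
    congr 1
    have hal : a * lam = lam - 1 := by
      rw [hadef]; field_simp
    rw [htdef]
    linear_combination (-(m * E)) * hal
  rw [hset, ENNReal.le_ofReal_iff_toReal_le (measure_ne_top μ _) (Real.exp_nonneg _)]
  calc (μ {ω | lam * E ≤ (∑ i, Y i) ω}).toReal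
      ≤ Real.exp (-t * (lam * E)) * mgf (∑ i, Y i) μ t := hChern
    _ ≤ Real.exp (-t * (lam * E)) * Real.exp (m * E * Real.log lam) := by
        rw [hmgf_sum]
        exact mul_le_mul_of_nonneg_left hprod (Real.exp_nonneg _)
    _ = Real.exp (-m * E * (lam - 1 - Real.log lam)) := hfinal
end
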